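/- Let $\alpha > \alpha' > 1$. Let $f : \mathbb{S}^1 \to \mathbb{C}$ be a function with $f(1) = 0$ such that $z \mapsto f(z)\,(1 + |\log|z-1||^{2\alpha})^{1/2}$ extends continuously to $\mathbb{S}^1$. Then $f$ can be approximated, in the norm $\|g\|_{\alpha'} = \sup_{|z|=1, z\neq 1} |\log|z-1||^{\alpha'}|g(z)|$, by functions of the form $(z-1)Q(z,\bar z)$ where $Q$ is a trigonometric polynomial: for every $\epsilon > 0$ there is a trigonometric polynomial $Q$ with $\|f - (z-1)Q\|_{\alpha'} < \epsilon$. -/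

import Mathlib

/-!
Write `L(w) = |log |w - 1||` and `W(w) = (1 + L(w)^{2α})^{1/2} ≥ L(w)^α`, so that `|f| ≤ C / W`.
Near `1` the weighted size `L^{α'} |f| ≤ C L^{α' - α}` is already small, while `L^{α'} |w - 1|`
stays bounded on the circle. Cutting `f` off near `1` by a Urysohn function `χ`, the quotient
`ψ = χ f / (w - 1)` is continuous on the circle, hence uniformly close to a Laurent polynomial `Q`
by Stone–Weierstrass (`z` and `z̄ = z⁻¹` separate points), and
`f - (w - 1) Q = (1 - χ) f + (w - 1) (ψ - Q)` is small in the weighted norm.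
-/

open Complex Filter Topology Metric Set

namespace UnitCircle

noncomputable def zpowMap (m : ℤ) : C(sphere (0:ℂ) 1, ℂ) :=
  ⟨fun w => (w : ℂ) ^ m,
    continuous_subtype_val.zpow₀ m fun w => Or.inl (ne_zero_of_mem_unit_sphere w)⟩

lemma zpowMap_add (a b : ℤ) : zpowMap (a + b) = zpowMap a * zpowMap b := by
  ext w
  exact zpow_add₀ (ne_zero_of_mem_unit_sphere w) a b

lemma star_zpowMap (m : ℤ) : star (zpowMap m) = zpowMap (-m) := by
  ext w
  simp only [zpowMap, ContinuousMap.star_apply, ContinuousMap.coe_mk, star_zpow₀, zpow_neg]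
  rw [← inv_zpow, Complex.inv_eq_conj (norm_eq_of_mem_sphere w)]
  rfl

lemma closure_zpowMap_one_subset :
    (Submonoid.closure ({zpowMap 1} ∪ star {zpowMap 1}) : Set C(sphere (0:ℂ) 1, ℂ)) ⊆
      range zpowMap := by
  intro p hp
  induction hp using Submonoid.closure_induction with
  | mem p hp =>
    rcases hp with rfl | hp
    · exact ⟨1, rfl⟩
    · rw [Set.star_singleton, Set.mem_singleton_iff] at hp
      exact ⟨-1, by rw [hp, star_zpowMap]⟩
  | one => exact ⟨0, by ext; simp [zpowMap]⟩
  | mul p q _ _ hp hq =>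
    obtain ⟨a, rfl⟩ := hp
    obtain ⟨b, rfl⟩ := hq
    exact ⟨a + b, zpowMap_add a b⟩

lemma exists_laurent_sum_eq_of_mem_span {q : C(sphere (0:ℂ) 1, ℂ)}
    (hq : q ∈ Submodule.span ℂ (range zpowMap)) :
    ∃ (N : ℕ) (c : ℤ → ℂ), ∀ w : sphere (0:ℂ) 1,
      q w = ∑ m ∈ Finset.Icc (-(N:ℤ)) N, c m * (w : ℂ) ^ m := by
  obtain ⟨c, rfl⟩ := Finsupp.mem_span_range_iff_exists_finsupp.1 hq
  set N := c.support.sup Int.natAbs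
  have hsupp : c.support ⊆ Finset.Icc (-(N : ℤ)) N := fun m hm => by
    have := Finset.le_sup (f := Int.natAbs) hm
    rw [Finset.mem_Icc]; omega
  refine ⟨N, c, fun w => ?_⟩
  rw [Finsupp.sum_of_support_subset c hsupp _ (fun _ _ => zero_smul ℂ (zpowMap _)),
    ContinuousMap.coe_sum, Finset.sum_apply]
  rfl

theorem exists_laurent_sum_near (h : C(sphere (0:ℂ) 1, ℂ)) {ε : ℝ} (hε : 0 < ε) :
    ∃ (N : ℕ) (c : ℤ → ℂ), ∀ w : sphere (0:ℂ) 1,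
      ‖h w - ∑ m ∈ Finset.Icc (-(N:ℤ)) N, c m * (w : ℂ) ^ m‖ < ε := by
  set A := StarAlgebra.adjoin ℂ {zpowMap 1}
  have hsep : A.SeparatesPoints := fun x y hxy =>
    ⟨zpowMap 1, ⟨zpowMap 1, StarAlgebra.self_mem_adjoin_singleton ℂ _, rfl⟩,
      by simpa [zpowMap] using Subtype.coe_injective.ne hxy⟩
  have hdense : h ∈ closure (A : Set C(sphere (0:ℂ) 1, ℂ)) := by
    rw [← A.topologicalClosure_coe,
      ContinuousMap.starSubalgebra_topologicalClosure_eq_top_of_separatesPoints A hsep]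
    trivial
  obtain ⟨q, hqA, hq⟩ := Metric.mem_closure_iff.1 hdense ε hε
  have hq_span : q ∈ Submodule.span ℂ (range zpowMap) := by
    have : q ∈ Subalgebra.toSubmodule A.toSubalgebra := hqA
    rw [StarAlgebra.adjoin_eq_span] at this
    exact Submodule.span_mono closure_zpowMap_one_subset this
  obtain ⟨N, c, hc⟩ := exists_laurent_sum_eq_of_mem_span hq_span
  refine ⟨N, c, fun w => ?_⟩
  rw [← hc, ← dist_eq_norm]
  exact (ContinuousMap.dist_apply_le_dist w).trans_lt hq

end UnitCircle

lemma continuousOn_mul_div_sub_of_eventually_eq_zero {s : Set ℂ} {a : ℂ} {f : ℂ → ℂ}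
    (hf : ∀ w ∈ s, w ≠ a → ContinuousWithinAt f s w) {χ : ℂ → ℝ} (hχ : Continuous χ)
    (hχa : χ =ᶠ[𝓝 a] 0) :
    ContinuousOn (fun w => f w * χ w / (w - a)) s := by
  intro w hw
  rcases eq_or_ne w a with rfl | hwa
  · refine (continuousAt_const (y := (0:ℂ)).congr ?_).continuousWithinAt
    filter_upwards [hχa] with z hz
    simp [hz]
  · exact ((hf w hw hwa).mul (continuous_ofReal.comp hχ).continuousWithinAt).div
      (continuousWithinAt_id.sub continuousWithinAt_const) (sub_ne_zero.2 hwa)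

lemma abs_log_rpow_mul_self_le {p x : ℝ} (hp : 0 < p) (hx0 : 0 ≤ x) (hx2 : x ≤ 2) :
    |Real.log x| ^ p * x ≤ p ^ p + 2 := by
  rcases hx0.eq_or_lt with rfl | hx0
  · rw [mul_zero]; positivity
  rcases le_or_gt x 1 with hx1 | hx1
  · have h := Real.abs_log_mul_self_rpow_lt x p⁻¹ hx0 hx1 (inv_pos.2 hp)
    rw [one_div, inv_inv, abs_mul, abs_of_pos (Real.rpow_pos_of_pos hx0 _)] at h
    calc |Real.log x| ^ p * x = (|Real.log x| * x ^ p⁻¹) ^ p := by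
          rw [Real.mul_rpow (abs_nonneg _) (by positivity), Real.rpow_inv_rpow hx0.le hp.ne']
      _ ≤ p ^ p := Real.rpow_le_rpow (by positivity) h.le hp.le
      _ ≤ p ^ p + 2 := by linarith
  · have hlog : |Real.log x| ≤ 1 := by
      rw [abs_of_nonneg (Real.log_nonneg hx1.le)]
      linarith [Real.log_le_sub_one_of_pos hx0]
    calc |Real.log x| ^ p * x ≤ 1 * 2 :=
          mul_le_mul (Real.rpow_le_one (abs_nonneg _) hlog hp.le) hx2 hx0.le zero_le_one
      _ ≤ p ^ p + 2 := by linarith [Real.rpow_nonneg hp.le p]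

lemma tendsto_abs_log_norm_sub (a : ℂ) :
    Tendsto (fun w => |Real.log ‖w - a‖|) (𝓝[≠] a) atTop :=
  tendsto_abs_atBot_atTop.comp <|
    Real.tendsto_log_nhdsGT_zero.comp (tendsto_norm_sub_self_nhdsNE a)

lemma tendsto_abs_log_rpow_mul_of_bounded {α α' C : ℝ} (hα : α' < α) {s : Set ℂ} {a : ℂ}
    {f : ℂ → ℂ} (hf : ∀ w ∈ s, w ≠ a → |Real.log ‖w - a‖| ^ α * ‖f w‖ ≤ C) :
    Tendsto (fun w => |Real.log ‖w - a‖| ^ α' * ‖f w‖) (𝓝[s \ {a}] a) (𝓝 0) := by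
  have hL : Tendsto (fun w => |Real.log ‖w - a‖|) (𝓝[s \ {a}] a) atTop :=
    (tendsto_abs_log_norm_sub a).mono_left (nhdsWithin_mono _ (sdiff_subset_compl _ _))
  have hupper :
      Tendsto (fun w => C * |Real.log ‖w - a‖| ^ (-(α - α'))) (𝓝[s \ {a}] a) (𝓝 0) := by
    simpa using ((tendsto_rpow_neg_atTop (sub_pos.2 hα)).comp hL).const_mul C
  refine tendsto_of_tendsto_of_tendsto_of_le_of_le' tendsto_const_nhds hupper
    (Eventually.of_forall fun w => by positivity) ?_
  filter_upwards [hL.eventually_gt_atTop 0, self_mem_nhdsWithin] with w hpos hw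
  calc |Real.log ‖w - a‖| ^ α' * ‖f w‖
      = |Real.log ‖w - a‖| ^ (-(α - α')) * (|Real.log ‖w - a‖| ^ α * ‖f w‖) := by
        rw [← mul_assoc, ← Real.rpow_add hpos]; ring_nf
    _ ≤ |Real.log ‖w - a‖| ^ (-(α - α')) * C := by
        gcongr; exact hf w hw.1 hw.2
    _ = C * |Real.log ‖w - a‖| ^ (-(α - α')) := mul_comm _ _

theorem exists_laurent_approx_weighted {ρ : ℂ → ℝ} {f : ℂ → ℂ} {K : ℝ}
    (hρ : ∀ w ∈ sphere (0:ℂ) 1, w ≠ 1 → 0 ≤ ρ w)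
    (hρK : ∀ w ∈ sphere (0:ℂ) 1, w ≠ 1 → ρ w * ‖w - 1‖ ≤ K)
    (hf : ∀ w ∈ sphere (0:ℂ) 1, w ≠ 1 → ContinuousWithinAt f (sphere 0 1) w)
    (hρf : Tendsto (fun w => ρ w * ‖f w‖) (𝓝[sphere 0 1 \ {1}] 1) (𝓝 0))
    {ε : ℝ} (hε : 0 < ε) :
    ∃ (N : ℕ) (c : ℤ → ℂ), ∀ w ∈ sphere (0:ℂ) 1, w ≠ 1 →
      ρ w * ‖f w - (w - 1) * ∑ m ∈ Finset.Icc (-(N:ℤ)) N, c m * w ^ m‖ < ε := by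
  obtain ⟨δ, hδ, hnear⟩ := Metric.tendsto_nhdsWithin_nhds.1 hρf (ε / 2) (half_pos hε)
  obtain ⟨χ, hχ0, hχ1, hχI⟩ := exists_continuous_zero_one_of_isClosed
    (s := closedBall 1 (δ / 2)) (t := {w : ℂ | δ ≤ dist w 1}) isClosed_closedBall
    (isClosed_le continuous_const (continuous_id.dist continuous_const))
    (Set.disjoint_left.2 fun w hw hw' => by
      rw [mem_closedBall] at hw; linarith [show δ ≤ dist w 1 from hw'])
  set ψ : ℂ → ℂ := fun w => f w * χ w / (w - 1)
  have hψ : ContinuousOn ψ (sphere 0 1) :=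
    continuousOn_mul_div_sub_of_eventually_eq_zero hf χ.continuous
      (Filter.mem_of_superset (closedBall_mem_nhds 1 (half_pos hδ)) hχ0)
  set K' := max K 1
  have hK' : 0 < K' := lt_max_of_lt_right one_pos
  obtain ⟨N, c, hc⟩ := UnitCircle.exists_laurent_sum_near ⟨_, hψ.domRestrict⟩
    (show 0 < ε / (3 * K') by positivity)
  refine ⟨N, c, fun w hw hw1 => ?_⟩
  set Q := ∑ m ∈ Finset.Icc (-(N:ℤ)) N, c m * w ^ m
  have hQ : ‖ψ w - Q‖ < ε / (3 * K') := hc ⟨w, hw⟩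
  have hsplit : f w - (w - 1) * Q = (1 - χ w) * f w + (w - 1) * (ψ w - Q) := by
    have : w - 1 ≠ 0 := sub_ne_zero.2 hw1
    simp only [ψ]; field_simp; ring
  have hcut : ρ w * ((1 - χ w) * ‖f w‖) ≤ ε / 2 := by
    rcases lt_or_ge (dist w 1) δ with hwδ | hwδ
    · have h := hnear ⟨hw, hw1⟩ hwδ
      rw [Real.dist_0_eq_abs, abs_of_nonneg (mul_nonneg (hρ w hw hw1) (norm_nonneg _))] at h
      calc ρ w * ((1 - χ w) * ‖f w‖) ≤ ρ w * (1 * ‖f w‖) := by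
            gcongr
            · exact hρ w hw hw1
            · linarith [(hχI w).1]
        _ ≤ ε / 2 := by rw [one_mul]; exact h.le
    · simp only [hχ1 hwδ, Pi.one_apply, sub_self, zero_mul, mul_zero]; positivity
  have happrox : ρ w * (‖w - 1‖ * ‖ψ w - Q‖) ≤ ε / 3 := by
    calc ρ w * (‖w - 1‖ * ‖ψ w - Q‖) = ρ w * ‖w - 1‖ * ‖ψ w - Q‖ := by ring
      _ ≤ K' * (ε / (3 * K')) := by
        gcongr
        exact (hρK w hw hw1).trans (le_max_left _ _)
      _ = ε / 3 := by field_simp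
  calc ρ w * ‖f w - (w - 1) * Q‖
      ≤ ρ w * ((1 - χ w) * ‖f w‖ + ‖w - 1‖ * ‖ψ w - Q‖) := by
        gcongr
        · exact hρ w hw hw1
        rw [hsplit]
        refine (norm_add_le _ _).trans_eq ?_
        rw [norm_mul, norm_mul, ← ofReal_one, ← ofReal_sub, norm_real, Real.norm_of_nonneg]
        linarith [(hχI w).2]
    _ < ε := by linarith

lemma continuousAt_one_add_abs_log_norm_sub_rpow_half {β : ℝ} (hβ : 0 ≤ β) {a w : ℂ}
    (hwa : w ≠ a) : ContinuousAt (fun z => (1 + |Real.log ‖z - a‖| ^ β) ^ ((1:ℝ)/2)) w := by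
  have : ‖w - a‖ ≠ 0 := by simpa [sub_eq_zero] using hwa
  fun_prop (disch := first | assumption | (right; positivity))

lemma continuousWithinAt_of_eq_mul_ofReal {s : Set ℂ} {a w : ℂ} {f g : ℂ → ℂ} {W : ℂ → ℝ}
    (hg : ContinuousWithinAt g s w) (hW : ContinuousAt W w) (hW0 : ∀ z, W z ≠ 0)
    (hfg : ∀ z ∈ s, z ≠ a → g z = f z * W z) (hw : w ∈ s) (hwa : w ≠ a) :
    ContinuousWithinAt f s w := by
  have hfW : ∀ z ∈ s, z ≠ a → f z = g z / W z := fun z hz hza => by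
    rw [hfg z hz hza, mul_div_cancel_right₀ _ (ofReal_ne_zero.2 (hW0 z))]
  refine (hg.div (continuous_ofReal.continuousAt.comp hW).continuousWithinAt
    (ofReal_ne_zero.2 (hW0 w))).congr_of_eventuallyEq ?_ (hfW w hw hwa)
  filter_upwards [self_mem_nhdsWithin,
    mem_nhdsWithin_of_mem_nhds (isOpen_compl_singleton.mem_nhds hwa)] with z hz hza
  exact hfW z hz hza

lemma rpow_le_rpow_one_add_rpow_two_mul_half {L α : ℝ} (hL : 0 ≤ L) :
    L ^ α ≤ (1 + L ^ (2 * α)) ^ (1 / 2 : ℝ) := by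
  calc L ^ α = (L ^ (2 * α)) ^ (1 / 2 : ℝ) := by rw [← Real.rpow_mul hL]; ring_nf
    _ ≤ (1 + L ^ (2 * α)) ^ (1 / 2 : ℝ) := by gcongr; linarith

theorem stmt3_general (α α' : ℝ) (h1 : 1 < α') (h2 : α' < α)
    (f : ℂ → ℂ)
    (g : ℂ → ℂ) (hg : ContinuousOn g (Metric.sphere (0:ℂ) 1))
    (hfg : ∀ w ∈ Metric.sphere (0:ℂ) 1, w ≠ 1 →
      g w = f w * (((1 + |Real.log ‖w - 1‖| ^ (2*α)) ^ ((1:ℝ)/2) : ℝ) : ℂ)) :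
    ∀ ε > (0:ℝ), ∃ (N : ℕ) (c : ℤ → ℂ),
      ∀ w ∈ Metric.sphere (0:ℂ) 1, w ≠ 1 →
        |Real.log ‖w - 1‖| ^ α' *
          ‖f w - (w - 1) * ∑ m ∈ Finset.Icc (-(N:ℤ)) (N:ℤ), c m * w ^ m‖ < ε := by
  intro ε hε
  set W : ℂ → ℝ := fun w => (1 + |Real.log ‖w - 1‖| ^ (2*α)) ^ ((1:ℝ)/2)
  have hW : ∀ w, 0 < W w := fun w => by positivity
  obtain ⟨C, hC⟩ := (isCompact_sphere (0:ℂ) 1).exists_bound_of_continuousOn hg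
  refine exists_laurent_approx_weighted (K := α' ^ α' + 2) (fun w _ _ => by positivity)
    (fun w hw _ => abs_log_rpow_mul_self_le (by linarith) (norm_nonneg _) ?_)
    (fun w hw hw1 => continuousWithinAt_of_eq_mul_ofReal (hg w hw)
      (continuousAt_one_add_abs_log_norm_sub_rpow_half (by linarith) hw1) (fun z => (hW z).ne')
      hfg hw hw1)
    (tendsto_abs_log_rpow_mul_of_bounded (C := C) h2 fun w hw hw1 => ?_) hε
  · calc ‖w - 1‖ ≤ ‖w‖ + ‖(1:ℂ)‖ := norm_sub_le _ _
      _ = 2 := by rw [mem_sphere_zero_iff_norm.1 hw, norm_one]; norm_num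
  · calc |Real.log ‖w - 1‖| ^ α * ‖f w‖ ≤ W w * ‖f w‖ := by
          gcongr; exact rpow_le_rpow_one_add_rpow_two_mul_half (abs_nonneg _)
      _ = ‖g w‖ := by
          rw [hfg w hw hw1, norm_mul, norm_real, Real.norm_of_nonneg (hW w).le, mul_comm]
      _ ≤ C := hC w hw

/-- approximation in the weighted norm `‖·‖_{α'}` of a function vanishing
logarithmically at `1` by functions `(z-1)Q(z)` with `Q` a trigonometric polynomial. -/
theorem stmt3 (α α' : ℝ) (h1 : 1 < α') (h2 : α' < α)
    (f : ℂ → ℂ) (hf1 : f 1 = 0)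
    (g : ℂ → ℂ) (hg : ContinuousOn g (Metric.sphere (0:ℂ) 1))
    (hfg : ∀ w ∈ Metric.sphere (0:ℂ) 1, w ≠ 1 →
      g w = f w * (((1 + |Real.log ‖w - 1‖| ^ (2*α)) ^ ((1:ℝ)/2) : ℝ) : ℂ)) :
    ∀ ε > (0:ℝ), ∃ (N : ℕ) (c : ℤ → ℂ),
      ∀ w ∈ Metric.sphere (0:ℂ) 1, w ≠ 1 →
        |Real.log ‖w - 1‖| ^ α' *
          ‖f w - (w - 1) * ∑ m ∈ Finset.Icc (-(N:ℤ)) (N:ℤ), c m * w ^ m‖ < ε :=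
  stmt3_general α α' h1 h2 f g hg hfg
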